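/- If player i is an α-null player in game v, i.e., the α-marginal contribution [mc^α_i(v)](S,P) = Σ_{T∈P, T≠S} α_i(S_{−i}, τ_i^T(P))·[v(S,P) − v(S_{−i}, τ_i^T(P))] is zero for every embedded coalition (S,P) with i ∈ S, then φ^α_i(v) = 0. -/

import Mathlib

open Finset

open scoped Classical

/-- A partition of the player set `Fin n`; following the paper's convention,
`∅` is a member of every partition. -/
def IsPartition {n : ℕ} (P : Finset (Finset (Fin n))) : Prop :=
  ∅ ∈ P ∧ ∀ a : Fin n, ∃! B : Finset (Fin n), B ∈ P ∧ a ∈ B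

/-- The set `𝒫` of all partitions of `Fin n`. -/
noncomputable def allPartitions (n : ℕ) : Finset (Finset (Finset (Fin n))) :=
  Finset.univ.filter IsPartition

/-- `C_i^π`: the set of players appearing after `i` in the ordering `π`. -/
def Cafter {n : ℕ} (π : Equiv.Perm (Fin n)) (i : Fin n) : Finset (Fin n) :=
  Finset.univ.filter fun j => π.symm i < π.symm j

/-- `P_{[S]}` : the partition obtained from `P` by merging all members of `S`
into a single coalition. -/
def pmerge {n : ℕ} (P : Finset (Finset (Fin n))) (S : Finset (Fin n)) :
    Finset (Finset (Fin n)) :=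
  P.image (· \ S) ∪ {S}

/-- `τ_i^T(P)` : the partition obtained from `P` by transferring `i` from its
coalition to the coalition `T` (taking `T = ∅` means that `i` forms a new
singleton coalition). -/
def moveTo {n : ℕ} (P : Finset (Finset (Fin n))) (i : Fin n) (T : Finset (Fin n)) :
    Finset (Finset (Fin n)) :=
  ((P.erase T).image fun B => B.erase i) ∪ {insert i T} ∪ {∅}

/-- A partition-function game: a real value for every (embedded) coalition. -/
abbrev Game (n : ℕ) := Finset (Fin n) → Finset (Finset (Fin n)) → ℝ

/-- A system of weights `α_i(S, P)` (meaningful for `i ∉ S`). -/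
abbrev Weights (n : ℕ) := Fin n → Finset (Fin n) → Finset (Finset (Fin n)) → ℝ

/-- The partition `{N, ∅}` in which the grand coalition is embedded. -/
def grandPart (n : ℕ) : Finset (Finset (Fin n)) := {Finset.univ, ∅}

/-- Normalization: for every embedded coalition `(S, P)` with `i ∈ S`,
`∑_{T ∈ P_{−S}} α_i(S_{−i}, τ_i^T(P)) = 1`. -/
def Normalized {n : ℕ} (w : Weights n) : Prop :=
  ∀ (i : Fin n) (S : Finset (Fin n)) (P : Finset (Finset (Fin n))),
    IsPartition P → S ∈ P → i ∈ S →
      ∑ T ∈ P.erase S, w i (S.erase i) (moveTo P i T) = 1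

/-- Weights take values in `[0, 1]`. -/
def InRange {n : ℕ} (w : Weights n) : Prop :=
  ∀ (i : Fin n) (S : Finset (Fin n)) (P : Finset (Finset (Fin n))),
    i ∉ S → 0 ≤ w i S P ∧ w i S P ≤ 1

/-- `pr^α_π(P) = ∏_{i ∈ N} α_i(C_i^π, P_{[C_i^π]})`. -/
noncomputable def pr {n : ℕ} (w : Weights n) (π : Equiv.Perm (Fin n))
    (P : Finset (Finset (Fin n))) : ℝ :=
  ∏ i : Fin n, w i (Cafter π i) (pmerge P (Cafter π i))

/-- The extended Shapley value `φ^α` (formula (1) of the paper). -/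
noncomputable def esv {n : ℕ} (w : Weights n) (v : Game n) (i : Fin n) : ℝ :=
  ((n.factorial : ℝ))⁻¹ * ∑ π : Equiv.Perm (Fin n), ∑ P ∈ allPartitions n,
    pr w π P *
      (v (insert i (Cafter π i)) (pmerge P (insert i (Cafter π i))) -
        v (Cafter π i) (pmerge P (Cafter π i)))

/-- The `α`-marginal contribution `[mc^α_i(v)](S, P)`. -/
noncomputable def mc {n : ℕ} (w : Weights n) (v : Game n) (i : Fin n)
    (S : Finset (Fin n)) (P : Finset (Finset (Fin n))) : ℝ :=
  ∑ T ∈ P.erase S, w i (S.erase i) (moveTo P i T) * (v S P - v (S.erase i) (moveTo P i T))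

/-- A genuine partition-function game: it vanishes off embedded coalitions
(and on the empty coalition). -/
def IsGame {n : ℕ} (v : Game n) : Prop :=
  ∀ S P, ¬ (IsPartition P ∧ S ∈ P ∧ S ≠ ∅) → v S P = 0

/-- The simple game `e^{(S₀, P₀)}`. -/
noncomputable def sgame {n : ℕ} (S₀ : Finset (Fin n)) (P₀ : Finset (Finset (Fin n))) :
    Game n :=
  fun S P => if S = S₀ ∧ P = P₀ then 1 else 0

/-- The permuted game `π(v)`, with `π(v)(S, P) = v(π(S), π(P))`. -/
def permGame {n : ℕ} (π : Equiv.Perm (Fin n)) (v : Game n) : Game n :=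
  fun S P => v (S.image π) (P.image (Finset.image π))

/-!
Order the players by `π` and let `S_k` be the players in positions `≥ k`. For every partition
`R` containing `S_k`, the weights of the players of `S_k`, multiplied together and summed over
all `P` with `P_[S_k] = R`, add up to `1`: if `j` is the first player of `S_k`, these `P` split
according to the coalition `T ∈ R_{-S_k}` with `P_[S_k \ {j}] = τ_j^T(R)`, and normalization
sums `j`'s weights over `T` to `1`. Splitting the summands of `φ^α_i` the same way at
`S = C_i^π ∪ {i}`, the players before `i` give a factor depending only on `R = P_[S]`, the
players after `i` sum out to `1`, and what is left for each `R` is that factor times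
`[mc^α_i(v)](S, R) = 0`.
-/

section Partitions

variable {n : ℕ}

lemma mem_pmerge {P : Finset (Finset (Fin n))} {S X : Finset (Fin n)} :
    X ∈ pmerge P S ↔ (∃ B ∈ P, B \ S = X) ∨ X = S := by
  simp [pmerge, or_comm]

lemma mem_moveTo {P : Finset (Finset (Fin n))} {i : Fin n} {T X : Finset (Fin n)} :
    X ∈ moveTo P i T ↔ (∃ B ∈ P.erase T, B.erase i = X) ∨ X = insert i T ∨ X = ∅ := by
  simp only [moveTo, mem_union, mem_image, mem_singleton, or_assoc]

lemma self_mem_pmerge (P : Finset (Finset (Fin n))) (S : Finset (Fin n)) : S ∈ pmerge P S :=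
  mem_pmerge.2 (Or.inr rfl)

namespace IsPartition

variable {P : Finset (Finset (Fin n))}

lemma eq_of_mem_of_mem (hP : IsPartition P) {B B' : Finset (Fin n)} {a : Fin n}
    (hB : B ∈ P) (hB' : B' ∈ P) (ha : a ∈ B) (ha' : a ∈ B') : B = B' :=
  (hP.2 a).unique ⟨hB, ha⟩ ⟨hB', ha'⟩

lemma disjoint (hP : IsPartition P) {B B' : Finset (Fin n)} (hB : B ∈ P) (hB' : B' ∈ P)
    (hne : B ≠ B') : Disjoint B B' :=
  disjoint_left.2 fun _ ha ha' => hne (hP.eq_of_mem_of_mem hB hB' ha ha')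

lemma notMem_of_mem_erase (hP : IsPartition P) {S T : Finset (Fin n)} {j : Fin n}
    (hS : S ∈ P) (hj : j ∈ S) (hT : T ∈ P.erase S) : j ∉ T := fun hjT =>
  ne_of_mem_erase hT (hP.eq_of_mem_of_mem (mem_of_mem_erase hT) hS hjT hj)

lemma pmerge (hP : IsPartition P) (S : Finset (Fin n)) : IsPartition (pmerge P S) := by
  refine ⟨mem_pmerge.2 (Or.inl ⟨∅, hP.1, empty_sdiff S⟩), fun a => ?_⟩
  by_cases ha : a ∈ S
  · refine ⟨S, ⟨self_mem_pmerge P S, ha⟩, ?_⟩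
    rintro X ⟨hX, haX⟩
    rcases mem_pmerge.1 hX with ⟨B, _, rfl⟩ | rfl
    · exact absurd ha (mem_sdiff.1 haX).2
    · rfl
  · obtain ⟨B, ⟨hB, haB⟩, hBu⟩ := hP.2 a
    refine ⟨B \ S, ⟨mem_pmerge.2 (Or.inl ⟨B, hB, rfl⟩), mem_sdiff.2 ⟨haB, ha⟩⟩, ?_⟩
    rintro X ⟨hX, haX⟩
    rcases mem_pmerge.1 hX with ⟨B', hB', rfl⟩ | rfl
    · rw [hBu B' ⟨hB', (mem_sdiff.1 haX).1⟩]
    · exact absurd haX ha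

lemma moveTo (hP : IsPartition P) {S T : Finset (Fin n)} {j : Fin n}
    (hS : S ∈ P) (hj : j ∈ S) (hT : T ∈ P.erase S) : IsPartition (moveTo P j T) := by
  have hjT := hP.notMem_of_mem_erase hS hj hT
  refine ⟨mem_moveTo.2 (Or.inr (Or.inr rfl)), fun a => ?_⟩
  by_cases haT : a ∈ insert j T
  · refine ⟨insert j T, ⟨mem_moveTo.2 (Or.inr (Or.inl rfl)), haT⟩, ?_⟩
    rintro X ⟨hX, haX⟩
    rcases mem_moveTo.1 hX with ⟨B, hB, rfl⟩ | rfl | rfl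
    · obtain ⟨haj, haB⟩ := mem_erase.1 haX
      have haT' : a ∈ T := (mem_insert.1 haT).resolve_left haj
      exact absurd (hP.eq_of_mem_of_mem (mem_of_mem_erase hB) (mem_of_mem_erase hT) haB haT')
        (ne_of_mem_erase hB)
    · rfl
    · exact absurd haX (notMem_empty a)
  · obtain ⟨haj, haT⟩ := not_or.1 (mt mem_insert.2 haT)
    obtain ⟨B, ⟨hB, haB⟩, hBu⟩ := hP.2 a
    have hBT : B ≠ T := fun h => haT (h ▸ haB)
    refine ⟨B.erase j, ⟨mem_moveTo.2 (Or.inl ⟨B, mem_erase.2 ⟨hBT, hB⟩, rfl⟩),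
      mem_erase.2 ⟨haj, haB⟩⟩, ?_⟩
    rintro X ⟨hX, haX⟩
    rcases mem_moveTo.1 hX with ⟨B', hB', rfl⟩ | rfl | rfl
    · rw [hBu B' ⟨mem_of_mem_erase hB', mem_of_mem_erase haX⟩]
    · exact absurd haX (by simp [haj, haT])
    · exact absurd haX (notMem_empty a)

end IsPartition

lemma pmerge_empty {P : Finset (Finset (Fin n))} (h : ∅ ∈ P) : pmerge P ∅ = P := by
  ext X
  simp only [mem_pmerge, sdiff_empty, exists_eq_right]
  exact ⟨fun hX => hX.elim id (· ▸ h), Or.inl⟩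

lemma pmerge_pmerge {P : Finset (Finset (Fin n))} {S S' : Finset (Fin n)}
    (hSS : S ⊆ S') (h : ∅ ∈ P) : pmerge (pmerge P S) S' = pmerge P S' := by
  have hsd (B : Finset (Fin n)) : (B \ S) \ S' = B \ S' := by
    rw [sdiff_sdiff_left, sup_eq_right.2 hSS]
  ext X
  rw [mem_pmerge, mem_pmerge]
  constructor
  · rintro (⟨B, hB, rfl⟩ | rfl)
    · rcases mem_pmerge.1 hB with ⟨B', hB', rfl⟩ | rfl
      · exact Or.inl ⟨B', hB', (hsd B').symm⟩
      · exact Or.inl ⟨∅, h, by rw [sdiff_eq_empty_iff_subset.2 hSS, empty_sdiff]⟩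
    · exact Or.inr rfl
  · rintro (⟨B, hB, rfl⟩ | rfl)
    · exact Or.inl ⟨B \ S, mem_pmerge.2 (Or.inl ⟨B, hB, rfl⟩), hsd B⟩
    · exact Or.inr rfl

lemma erase_mem_moveTo {R : Finset (Finset (Fin n))} {S T : Finset (Fin n)} (j : Fin n)
    (hS : S ∈ R) (hT : T ∈ R.erase S) : S.erase j ∈ moveTo R j T :=
  mem_moveTo.2 (Or.inl ⟨S, mem_erase.2 ⟨(ne_of_mem_erase hT).symm, hS⟩, rfl⟩)

lemma pmerge_moveTo {R : Finset (Finset (Fin n))} {S T : Finset (Fin n)} {j : Fin n}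
    (hR : IsPartition R) (hS : S ∈ R) (hj : j ∈ S) (hT : T ∈ R.erase S) :
    pmerge (moveTo R j T) S = R := by
  have hTR : T ∈ R := mem_of_mem_erase hT
  have hoff {X : Finset (Fin n)} (hX : X ∈ R) (hXS : X ≠ S) :
      X.erase j \ S = X ∧ insert j X \ S = X := by
    have hd := hR.disjoint hX hS hXS
    rw [erase_eq_of_notMem (disjoint_right.1 hd hj), insert_sdiff_of_mem _ hj,
      sdiff_eq_self_of_disjoint hd]
    exact ⟨rfl, rfl⟩
  ext X
  rw [mem_pmerge]
  constructor
  · rintro (⟨B, hB, rfl⟩ | rfl)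
    · rcases mem_moveTo.1 hB with ⟨B', hB', rfl⟩ | rfl | rfl
      · by_cases hB'S : B' = S
        · rw [hB'S, sdiff_eq_empty_iff_subset.2 (erase_subset _ _)]
          exact hR.1
        · rw [(hoff (mem_of_mem_erase hB') hB'S).1]
          exact mem_of_mem_erase hB'
      · rwa [(hoff hTR (ne_of_mem_erase hT)).2]
      · simpa using hR.1
    · exact hS
  · intro hX
    by_cases hXS : X = S
    · exact Or.inr hXS
    by_cases hXT : X = T
    · exact Or.inl ⟨insert j T, mem_moveTo.2 (Or.inr (Or.inl rfl)),
        hXT ▸ (hoff hX hXS).2⟩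
    · exact Or.inl ⟨X.erase j, mem_moveTo.2 (Or.inl ⟨X, mem_erase.2 ⟨hXT, hX⟩, rfl⟩),
        (hoff hX hXS).1⟩

lemma pmerge_erase_eq_moveTo {P : Finset (Finset (Fin n))} {S B₀ : Finset (Fin n)} {j : Fin n}
    (hP : IsPartition P) (hj : j ∈ S) (hB₀ : B₀ ∈ P) (hjB₀ : j ∈ B₀) :
    pmerge P (S.erase j) = moveTo (pmerge P S) j (B₀ \ S) := by
  have hjT : j ∉ B₀ \ S := fun h => (mem_sdiff.1 h).2 hj
  have hoff {B : Finset (Fin n)} (hjB : j ∉ B) :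
      B \ S.erase j = B \ S ∧ (B \ S).erase j = B \ S :=
    ⟨by grind, erase_eq_of_notMem fun h => hjB (mem_sdiff.1 h).1⟩
  ext X
  rw [mem_pmerge, mem_moveTo]
  constructor
  · rintro (⟨B, hB, rfl⟩ | rfl)
    · by_cases hjB : j ∈ B
      · obtain rfl := hP.eq_of_mem_of_mem hB hB₀ hjB hjB₀
        exact Or.inr (Or.inl (sdiff_erase hjB))
      rw [(hoff hjB).1]
      by_cases hBT : B \ S = B₀ \ S
      · refine Or.inr (Or.inr (eq_empty_of_forall_notMem fun a ha => hjB ?_))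
        have hB₀' : a ∈ B₀ \ S := hBT ▸ ha
        exact hP.eq_of_mem_of_mem hB₀ hB (mem_sdiff.1 hB₀').1 (mem_sdiff.1 ha).1 ▸ hjB₀
      · exact Or.inl ⟨B \ S, mem_erase.2 ⟨hBT, mem_pmerge.2 (Or.inl ⟨B, hB, rfl⟩)⟩,
          (hoff hjB).2⟩
    · exact Or.inl ⟨S, mem_erase.2 ⟨fun h => hjT (h ▸ hj), self_mem_pmerge P S⟩, rfl⟩
  · rintro (⟨Y, hY, rfl⟩ | rfl | rfl)
    · obtain ⟨hYT, hY⟩ := mem_erase.1 hY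
      rcases mem_pmerge.1 hY with ⟨B, hB, rfl⟩ | rfl
      · have hjB : j ∉ B := fun hjB => hYT (by rw [hP.eq_of_mem_of_mem hB hB₀ hjB hjB₀])
        exact Or.inl ⟨B, hB, by rw [(hoff hjB).1, (hoff hjB).2]⟩
      · exact Or.inr rfl
    · exact Or.inl ⟨B₀, hB₀, sdiff_erase hjB₀⟩
    · exact Or.inl ⟨∅, hP.1, empty_sdiff _⟩

lemma moveTo_injOn {R : Finset (Finset (Fin n))} {S : Finset (Fin n)} {j : Fin n}
    (hR : IsPartition R) (hS : S ∈ R) (hj : j ∈ S) :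
    Set.InjOn (moveTo R j) (R.erase S) := by
  intro T₁ hT₁ T₂ hT₂ h
  have hmem : insert j T₁ ∈ moveTo R j T₂ := h ▸ mem_moveTo.2 (Or.inr (Or.inl rfl))
  rcases mem_moveTo.1 hmem with ⟨B, -, hB⟩ | hins | hempty
  · exact absurd (hB ▸ mem_insert_self j T₁) (notMem_erase j B)
  · simpa [erase_insert (hR.notMem_of_mem_erase hS hj hT₁),
      erase_insert (hR.notMem_of_mem_erase hS hj hT₂)] using congrArg (erase · j) hins
  · exact absurd hempty (insert_ne_empty j T₁)

end Partitions

section Fibers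

variable {n : ℕ}

noncomputable def mergeFiber (S : Finset (Fin n)) (R : Finset (Finset (Fin n))) :
    Finset (Finset (Finset (Fin n))) :=
  {P ∈ allPartitions n | pmerge P S = R}

lemma mem_mergeFiber {S : Finset (Fin n)} {R P : Finset (Finset (Fin n))} :
    P ∈ mergeFiber S R ↔ IsPartition P ∧ pmerge P S = R := by
  simp [mergeFiber, allPartitions]

lemma mergeFiber_empty {R : Finset (Finset (Fin n))} (hR : IsPartition R) :
    mergeFiber ∅ R = {R} := by
  ext P
  rw [mem_mergeFiber, mem_singleton]
  exact ⟨fun ⟨hP, hPR⟩ => pmerge_empty hP.1 ▸ hPR, by rintro rfl; exact ⟨hR, pmerge_empty hR.1⟩⟩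

lemma mergeFiber_eq_biUnion {R : Finset (Finset (Fin n))} {S : Finset (Fin n)} {j : Fin n}
    (hR : IsPartition R) (hS : S ∈ R) (hj : j ∈ S) :
    mergeFiber S R = (R.erase S).biUnion fun T => mergeFiber (S.erase j) (moveTo R j T) := by
  ext P
  simp only [mem_biUnion, mem_mergeFiber]
  constructor
  · rintro ⟨hP, rfl⟩
    obtain ⟨B₀, ⟨hB₀, hjB₀⟩, -⟩ := hP.2 j
    have hjT : j ∉ B₀ \ S := fun h => (mem_sdiff.1 h).2 hj
    exact ⟨B₀ \ S, mem_erase.2 ⟨fun h => hjT (by rwa [h]), mem_pmerge.2 (Or.inl ⟨B₀, hB₀, rfl⟩)⟩,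
      hP, pmerge_erase_eq_moveTo hP hj hB₀ hjB₀⟩
  · rintro ⟨T, hT, hP, hPT⟩
    refine ⟨hP, ?_⟩
    rw [← pmerge_pmerge (erase_subset j S) hP.1, hPT, pmerge_moveTo hR hS hj hT]

lemma sum_eq_sum_mergeFiber (S : Finset (Fin n)) (f : Finset (Finset (Fin n)) → ℝ) :
    ∑ P ∈ allPartitions n, f P =
      ∑ R ∈ allPartitions n with S ∈ R, ∑ P ∈ mergeFiber S R, f P := by
  refine (sum_fiberwise_of_maps_to (fun P hP => ?_) f).symm
  have hP : IsPartition P := (mem_filter.1 hP).2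
  exact mem_filter.2 ⟨mem_filter.2 ⟨mem_univ _, hP.pmerge S⟩, self_mem_pmerge P S⟩

/-- The partitions `P` with `P_[S] = R` are sorted by the coalition `T ∈ R_{-S}` that `j`
joins: `P_[S \ {j}] = τ_j^T(R)`. -/
lemma sum_mergeFiber_mul {R : Finset (Finset (Fin n))} {S : Finset (Fin n)} {j : Fin n}
    (hR : IsPartition R) (hS : S ∈ R) (hj : j ∈ S) (F g : Finset (Finset (Fin n)) → ℝ)
    (hg : ∀ R', IsPartition R' → S.erase j ∈ R' → ∑ P ∈ mergeFiber (S.erase j) R', g P = 1) :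
    ∑ P ∈ mergeFiber S R, F (pmerge P (S.erase j)) * g P =
      ∑ T ∈ R.erase S, F (moveTo R j T) := by
  rw [mergeFiber_eq_biUnion hR hS hj, sum_biUnion]
  · refine sum_congr rfl fun T hT => ?_
    have hfiber : ∀ P ∈ mergeFiber (S.erase j) (moveTo R j T),
        F (pmerge P (S.erase j)) * g P = F (moveTo R j T) * g P :=
      fun P hP => by rw [(mem_mergeFiber.1 hP).2]
    rw [sum_congr rfl hfiber, ← mul_sum, hg _ (hR.moveTo hS hj hT) (erase_mem_moveTo j hS hT),
      mul_one]
  · intro T₁ hT₁ T₂ hT₂ hne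
    refine disjoint_left.2 fun P hP₁ hP₂ => hne (moveTo_injOn hR hS hj hT₁ hT₂ ?_)
    rw [← (mem_mergeFiber.1 hP₁).2, ← (mem_mergeFiber.1 hP₂).2]

end Fibers

section Suffix

variable {n : ℕ}

def suffix (π : Equiv.Perm (Fin n)) (k : ℕ) : Finset (Fin n) :=
  {j | k ≤ (π.symm j : ℕ)}

variable {π : Equiv.Perm (Fin n)}

lemma mem_suffix {k : ℕ} {j : Fin n} : j ∈ suffix π k ↔ k ≤ (π.symm j : ℕ) := by
  simp [suffix]

lemma suffix_eq_empty {k : ℕ} (hk : n ≤ k) : suffix π k = ∅ :=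
  eq_empty_of_forall_notMem fun j hj => by have := (π.symm j).isLt; grind [mem_suffix]

lemma mem_Cafter {i j : Fin n} : j ∈ Cafter π i ↔ (π.symm i : ℕ) < π.symm j := by
  simp only [Cafter, mem_filter, mem_univ, true_and, Fin.lt_def]

lemma Cafter_eq_suffix (j : Fin n) : Cafter π j = suffix π (π.symm j + 1) := by
  ext
  rw [mem_Cafter, mem_suffix, Nat.succ_le_iff]

lemma suffix_symm_apply (j : Fin n) : suffix π (π.symm j) = insert j (Cafter π j) := by
  ext x
  simp only [mem_suffix, mem_Cafter, mem_insert]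
  constructor
  · intro h
    rcases h.eq_or_lt with h | h
    · exact Or.inl (π.symm.injective (Fin.ext h).symm)
    · exact Or.inr h
  · rintro (rfl | h)
    · exact le_rfl
    · exact h.le

lemma notMem_Cafter_self (j : Fin n) : j ∉ Cafter π j := by simp [mem_Cafter]

lemma suffix_subset_Cafter {k : ℕ} {j : Fin n} (hj : j ∉ suffix π k) :
    suffix π k ⊆ Cafter π j := fun x hx => by
  rw [mem_suffix, not_le] at hj
  exact mem_Cafter.2 (hj.trans_le (mem_suffix.1 hx))

noncomputable def suffixWeight (w : Weights n) (π : Equiv.Perm (Fin n)) (k : ℕ)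
    (P : Finset (Finset (Fin n))) : ℝ :=
  ∏ j ∈ suffix π k, w j (Cafter π j) (pmerge P (Cafter π j))

lemma suffixWeight_symm_apply (w : Weights n) (j : Fin n) (P : Finset (Finset (Fin n))) :
    suffixWeight w π (π.symm j) P =
      w j (Cafter π j) (pmerge P (Cafter π j)) * suffixWeight w π (π.symm j + 1) P := by
  rw [suffixWeight, suffix_symm_apply, prod_insert (notMem_Cafter_self j), suffixWeight,
    Cafter_eq_suffix]

lemma pr_eq_mul_suffixWeight (w : Weights n) (k : ℕ) {P : Finset (Finset (Fin n))}
    (hP : ∅ ∈ P) :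
    pr w π P = (∏ j ∈ univ \ suffix π k,
      w j (Cafter π j) (pmerge (pmerge P (suffix π k)) (Cafter π j))) * suffixWeight w π k P := by
  rw [pr, suffixWeight, ← prod_sdiff (subset_univ (suffix π k))]
  congr 1
  refine prod_congr rfl fun j hj => ?_
  rw [pmerge_pmerge (suffix_subset_Cafter (mem_sdiff.1 hj).2) hP]

lemma sum_mergeFiber_suffixWeight {w : Weights n} (hnorm : Normalized w) {k : ℕ} (hk : k ≤ n)
    {R : Finset (Finset (Fin n))} (hR : IsPartition R) (hS : suffix π k ∈ R) :
    ∑ P ∈ mergeFiber (suffix π k) R, suffixWeight w π k P = 1 := by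
  induction hk using Nat.decreasingInduction generalizing R with
  | self =>
    simp [suffix_eq_empty le_rfl, mergeFiber_empty hR, suffixWeight]
  | of_succ k hk ih =>
    obtain ⟨j, rfl⟩ : ∃ j, (π.symm j : ℕ) = k := ⟨π ⟨k, hk⟩, by simp⟩
    have hjS : j ∈ suffix π (π.symm j) := mem_suffix.2 le_rfl
    have herase : (suffix π (π.symm j)).erase j = Cafter π j := by
      rw [suffix_symm_apply, erase_insert (notMem_Cafter_self j)]
    have hstep := sum_mergeFiber_mul hR hS hjS (w j (Cafter π j))
      (suffixWeight w π (π.symm j + 1)) (by rw [herase, Cafter_eq_suffix]; exact fun _ => ih)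
    have hnormj := hnorm j _ R hR hS hjS
    rw [herase] at hstep hnormj
    simp only [suffixWeight_symm_apply, hstep, hnormj]

end Suffix

lemma sum_pr_mul_marginal_eq_zero {n : ℕ} {w : Weights n} (hnorm : Normalized w)
    {v : Game n} {i : Fin n}
    (hnull : ∀ S P, IsPartition P → S ∈ P → i ∈ S → mc w v i S P = 0)
    (π : Equiv.Perm (Fin n)) :
    ∑ P ∈ allPartitions n, pr w π P *
      (v (insert i (Cafter π i)) (pmerge P (insert i (Cafter π i))) -
        v (Cafter π i) (pmerge P (Cafter π i))) = 0 := by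
  set S := suffix π (π.symm i)
  set C := Cafter π i
  have hSC : insert i C = S := (suffix_symm_apply i).symm
  have herase : S.erase i = C := by rw [← hSC, erase_insert (notMem_Cafter_self i)]
  have hiS : i ∈ S := mem_suffix.2 le_rfl
  set A : Finset (Finset (Fin n)) → ℝ :=
    fun R => ∏ j ∈ univ \ S, w j (Cafter π j) (pmerge R (Cafter π j))
  set F : Finset (Finset (Fin n)) → Finset (Finset (Fin n)) → ℝ :=
    fun R Q => A R * (w i C Q * (v S R - v C Q))
  have hsummand : ∀ P ∈ allPartitions n,
      pr w π P * (v S (pmerge P S) - v C (pmerge P C)) =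
        F (pmerge P S) (pmerge P C) * suffixWeight w π (π.symm i + 1) P := fun P hP => by
    rw [pr_eq_mul_suffixWeight w _ (mem_filter.1 hP).2.1, suffixWeight_symm_apply]
    ring
  rw [hSC, sum_congr rfl hsummand, sum_eq_sum_mergeFiber S]
  refine sum_eq_zero fun R hR => ?_
  obtain ⟨hRmem, hSR⟩ := mem_filter.1 hR
  have hRpart : IsPartition R := (mem_filter.1 hRmem).2
  have hfiber : ∀ P ∈ mergeFiber S R,
      F (pmerge P S) (pmerge P C) * suffixWeight w π (π.symm i + 1) P =
        F R (pmerge P (S.erase i)) * suffixWeight w π (π.symm i + 1) P := fun P hP => by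
    rw [(mem_mergeFiber.1 hP).2, herase]
  rw [sum_congr rfl hfiber, sum_mergeFiber_mul hRpart hSR hiS _ _ ?_]
  · have hmc := hnull S R hRpart hSR hiS
    rw [mc, herase] at hmc
    simp only [F, ← mul_sum, hmc, mul_zero]
  · rw [herase, show C = suffix π (π.symm i + 1) from Cafter_eq_suffix i]
    exact fun _ => sum_mergeFiber_suffixWeight hnorm (π.symm i).isLt

theorem stmt7_general (n : ℕ) (w : Weights n) (hnorm : Normalized w)
    (v : Game n) (i : Fin n)
    (hnull : ∀ S P, IsPartition P → S ∈ P → i ∈ S → mc w v i S P = 0) :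
    esv w v i = 0 := by
  rw [esv, sum_eq_zero fun π _ => sum_pr_mul_marginal_eq_zero hnorm hnull π, mul_zero]

/-- The Null-Player Axiom for `φ^α`: an `α`-null player receives zero. -/
theorem stmt7 (n : ℕ) (w : Weights n) (hr : InRange w) (hnorm : Normalized w)
    (v : Game n) (hv0 : ∀ P, v ∅ P = 0) (i : Fin n)
    (hnull : ∀ S P, IsPartition P → S ∈ P → i ∈ S → mc w v i S P = 0) :
    esv w v i = 0 :=
  stmt7_general n w hnorm v i hnull
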